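/- For every integer k ≥ 1, we have tr((AB)^k) = 0 in R, where AB denotes the product of the matrices A and B over R and tr denotes the trace of a matrix with entries in R. -/

import Mathlib

/-!
The entries of `A` and `B` are vectors in the exterior algebra, so they pairwise anticommute, and
every entry of `AB` (a sum of products of two of them) commutes with all of them. Hence the
entries of `AB` commute pairwise, so `tr ((AB)^k) = tr (((AB)ᵀ)^k)`, and `(AB)ᵀ = BA` by
anticommutation together with `Aᵀ = -A`, `Bᵀ = B`. Writing `(BA)^k = B (AB)^(k-1) A` and moving
the last `A` to the front of the trace costs one sign, since `A`'s entries anticommute with those of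
`B (AB)^(k-1)`. So the trace equals its own negative, and vanishes over `ℂ`.
-/

open ExteriorAlgebra Matrix

set_option synthInstance.maxHeartbeats 1000000

/-- The subspace of pairs `(M, N)` of complex `n × n` matrices with `M`
alternating and `N` symmetric. -/
noncomputable def altSymSubmodule (n : ℕ) :
    Submodule ℂ (Matrix (Fin n) (Fin n) ℂ × Matrix (Fin n) (Fin n) ℂ) where
  carrier := {p | p.1ᵀ = -p.1 ∧ p.2ᵀ = p.2}
  add_mem' := by
    rintro ⟨a1, a2⟩ ⟨b1, b2⟩ ⟨ha1, ha2⟩ ⟨hb1, hb2⟩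
    constructor
    · show (a1 + b1)ᵀ = -(a1 + b1)
      rw [Matrix.transpose_add, ha1, hb1, neg_add]
    · show (a2 + b2)ᵀ = a2 + b2
      rw [Matrix.transpose_add, ha2, hb2]
  zero_mem' := by constructor <;> simp
  smul_mem' := by
    rintro c ⟨a1, a2⟩ ⟨h1, h2⟩
    constructor
    · show (c • a1)ᵀ = -(c • a1)
      rw [Matrix.transpose_smul, h1, smul_neg]
    · show (c • a2)ᵀ = c • a2
      rw [Matrix.transpose_smul, h2]

/-- The generic alternating matrix `A` with entries in
`Λ(Λ₂(V) ⊕ S₂(V*))`, whose `(i,j)` entry is the image of `(E_{ij} - E_{ji}, 0)`. -/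
noncomputable def genericAlt (n : ℕ) :
    Matrix (Fin n) (Fin n) (ExteriorAlgebra ℂ (altSymSubmodule n)) :=
  fun i j => ExteriorAlgebra.ι ℂ
    ⟨(Matrix.single i j (1 : ℂ) - Matrix.single j i (1 : ℂ), 0), by
      constructor
      · show _ = _
        ext a b
        simp [Matrix.transpose_apply, Matrix.single, and_comm]
      · simp⟩

/-- The generic symmetric matrix `B` with entries in
`Λ(Λ₂(V) ⊕ S₂(V*))`, whose `(i,j)` entry is the image of `(0, E_{ij} + E_{ji})`. -/
noncomputable def genericSym (n : ℕ) :
    Matrix (Fin n) (Fin n) (ExteriorAlgebra ℂ (altSymSubmodule n)) :=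
  fun i j => ExteriorAlgebra.ι ℂ
    ⟨(0, Matrix.single i j (1 : ℂ) + Matrix.single j i (1 : ℂ)), by
      constructor
      · simp
      · show _ = _
        ext a b
        simp only [Matrix.transpose_apply, Matrix.add_apply, Matrix.single, Matrix.of_apply, and_comm]
        rw [add_comm]⟩

section Anticommuting

variable {S : Type*} [Ring S] {X : Set S}

theorem mul_mem_centralizer_of_anticommute (hX : ∀ x ∈ X, ∀ y ∈ X, x * y = -(y * x))
    {x y : S} (hx : x ∈ X) (hy : y ∈ X) : x * y ∈ Subring.centralizer X := by
  rw [Subring.mem_centralizer_iff]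
  intro z hz
  rw [← mul_assoc, hX z hz x hx, neg_mul, mul_assoc, hX z hz y hy, mul_neg, neg_neg, mul_assoc]

theorem mul_anticommute_of_mem_centralizer (hX : ∀ x ∈ X, ∀ y ∈ X, x * y = -(y * x))
    {x y c : S} (hx : x ∈ X) (hy : y ∈ X) (hc : c ∈ Subring.centralizer X) :
    x * (y * c) = -(y * c * x) := by
  rw [← mul_assoc, hX x hx y hy, neg_mul, mul_assoc, mul_assoc,
    Subring.mem_centralizer_iff.mp hc x hx]

end Anticommuting

namespace Matrix

variable {l m n S : Type*} [Fintype m] [Ring S]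

theorem transpose_mul_of_anticommute {A : Matrix l m S} {B : Matrix m n S}
    (h : ∀ i j i' j', A i j * B i' j' = -(B i' j' * A i j)) : (A * B)ᵀ = -(Bᵀ * Aᵀ) := by
  ext i j
  simp only [transpose_apply, mul_apply, neg_apply, h, Finset.sum_neg_distrib]

theorem trace_mul_eq_neg_of_anticommute [Fintype n] {A : Matrix m n S} {N : Matrix n m S}
    (h : ∀ i j i' j', A i j * N i' j' = -(N i' j' * A i j)) :
    trace (N * A) = -trace (A * N) := by
  simp only [trace, diag_apply, mul_apply, h, Finset.sum_neg_distrib, neg_neg]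
  exact Finset.sum_comm

variable [DecidableEq m]

theorem pow_apply_mem {E : Subring S} {M : Matrix m m S} (hM : ∀ i j, M i j ∈ E) (k : ℕ)
    (i j : m) : (M ^ k) i j ∈ E := by
  induction k generalizing i j with
  | zero => rw [pow_zero, one_apply]; split_ifs <;> simp
  | succ k ih => exact pow_succ M k ▸ E.sum_mem fun r _ => E.mul_mem (ih i r) (hM r j)

open scoped IsMulCommutative in
/-- The entries of `M` generate a commutative subring, over which `transpose_pow` applies. -/
theorem trace_transpose_pow_of_commute {M : Matrix m m S}
    (hM : ∀ i j i' j', M i j * M i' j' = M i' j' * M i j) (k : ℕ) :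
    trace (Mᵀ ^ k) = trace (M ^ k) := by
  let E := Subring.closure (Set.range fun p : m × m => M p.1 p.2)
  have : IsMulCommutative E := Subring.isMulCommutative_closure <| by
    rintro _ ⟨⟨i, j⟩, rfl⟩ _ ⟨⟨i', j'⟩, rfl⟩
    exact hM i j i' j'
  let M' : Matrix m m E := fun i j => ⟨M i j, Subring.subset_closure ⟨(i, j), rfl⟩⟩
  have hM' : M = M'.map E.subtype := rfl
  rw [hM', ← transpose_map, ← Matrix.map_pow, ← Matrix.map_pow,
    ← AddMonoidHom.map_trace E.subtype, ← AddMonoidHom.map_trace E.subtype, ← transpose_pow,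
    trace_transpose]

theorem trace_mul_pow_succ_eq_neg {X : Set S} {A B : Matrix m m S}
    (hX : ∀ x ∈ X, ∀ y ∈ X, x * y = -(y * x))
    (hA : ∀ i j, A i j ∈ X) (hB : ∀ i j, B i j ∈ X) (hAt : Aᵀ = -A) (hBt : Bᵀ = B) (k : ℕ) :
    trace ((A * B) ^ (k + 1)) = -trace ((A * B) ^ (k + 1)) := by
  have hAB : ∀ i j, (A * B) i j ∈ Subring.centralizer X := fun i j =>
    Subring.sum_mem _ fun r _ => mul_mem_centralizer_of_anticommute hX (hA i r) (hB r j)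
  have hcomm : ∀ c ∈ Subring.centralizer X, ∀ x ∈ X, Commute c x := fun c hc x hx =>
    (Subring.mem_centralizer_iff.mp hc x hx).symm
  have hAB_comm : ∀ i j i' j', (A * B) i j * (A * B) i' j' = (A * B) i' j' * (A * B) i j :=
    fun i j i' j' => (Commute.sum_right _ _ _ fun r _ =>
      (hcomm _ (hAB i j) _ (hA i' r)).mul_right (hcomm _ (hAB i j) _ (hB r j'))).eq
  have hA_anticomm :
      ∀ i j i' j', A i j * (B * (A * B) ^ k) i' j' = -((B * (A * B) ^ k) i' j' * A i j) :=
    fun i j i' j' => by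
      simp only [mul_apply, Finset.mul_sum, Finset.sum_mul, ← Finset.sum_neg_distrib]
      exact Finset.sum_congr rfl fun r _ =>
        mul_anticommute_of_mem_centralizer hX (hA i j) (hB i' r) (pow_apply_mem hAB k r j')
  calc trace ((A * B) ^ (k + 1))
      = trace ((A * B)ᵀ ^ (k + 1)) := (trace_transpose_pow_of_commute hAB_comm _).symm
    _ = trace ((B * A) ^ (k + 1)) := by
      rw [transpose_mul_of_anticommute fun i j i' j' => hX _ (hA i j) _ (hB i' j'), hAt, hBt,
        mul_neg, neg_neg]
    _ = trace (B * (A * B) ^ k * A) := by rw [pow_succ', mul_assoc, ← mul_pow_mul, ← mul_assoc]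
    _ = -trace (A * (B * (A * B) ^ k)) := trace_mul_eq_neg_of_anticommute hA_anticomm
    _ = -trace ((A * B) ^ (k + 1)) := by rw [← mul_assoc, ← pow_succ']

end Matrix

theorem eq_zero_of_eq_neg {K V : Type*} [DivisionRing K] [CharZero K] [AddCommGroup V]
    [Module K V] {v : V} (h : v = -v) : v = 0 := by
  have h2 : (2 : K) • v = 0 := by rw [two_smul]; nth_rw 2 [h]; exact add_neg_cancel v
  exact (smul_eq_zero.mp h2).resolve_left two_ne_zero

theorem genericAlt_transpose (n : ℕ) : (genericAlt n)ᵀ = -genericAlt n := by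
  ext i j
  rw [transpose_apply, neg_apply, genericAlt, genericAlt, ← map_neg]
  congr 1
  ext : 2 <;> simp

theorem genericSym_transpose (n : ℕ) : (genericSym n)ᵀ = genericSym n := by
  ext i j
  simp only [transpose_apply, genericSym]
  congr 1
  ext : 2 <;> simp [add_comm]

theorem trace_AB_pow_eq_zero_general (n : ℕ) (k : ℕ) (hk : 1 ≤ k) :
    Matrix.trace ((genericAlt n * genericSym n) ^ k) = 0 := by
  obtain ⟨m, rfl⟩ := Nat.exists_eq_add_of_le' hk
  have hι : ∀ x ∈ Set.range (ι ℂ (M := altSymSubmodule n)), ∀ y ∈ Set.range (ι ℂ),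
      x * y = -(y * x) := by
    rintro _ ⟨x, rfl⟩ _ ⟨y, rfl⟩
    exact eq_neg_of_add_eq_zero_left (ι_add_mul_swap x y)
  exact eq_zero_of_eq_neg (K := ℂ) <| trace_mul_pow_succ_eq_neg hι (fun _ _ => ⟨_, rfl⟩)
    (fun _ _ => ⟨_, rfl⟩) (genericAlt_transpose n) (genericSym_transpose n) m

theorem trace_AB_pow_eq_zero (n : ℕ) (hn : 0 < n) (k : ℕ) (hk : 1 ≤ k) :
    Matrix.trace ((genericAlt n * genericSym n) ^ k) = 0 :=
  trace_AB_pow_eq_zero_general n k hk
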